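/- arXiv:1602.06741 — 2 statements merged into one kernel-verified Lean document; each statement's English description precedes it below -/
import Mathlib

section
/- In any normed plane, equality c_R(‖·‖) + c_D(‖·‖) = 1 holds if and only if the supremum defining c_R is attained at a pair x,y ∈ S with x ⊣_B y. -/
/-! For unit vectors with `x ⊣_B y` one has `s(x, y) = ‖x‖ = 1`, hence
`|s(x, y) - s(y, x)| = 1 - s(y, x)`. Every such pair therefore gives `c_R ≥ 1 - s(y, x)`, so
`c_R + c_D ≥ 1`, and a pair attaining `c_R` gives `c_R ≤ 1 - c_D`. Conversely, if `c_R + c_D = 1`,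
a pair attaining `c_D` attains `c_R`; `c_D` is attained because the orthogonal unit pairs form a
compact set on which the sine is continuous, the infimum over `t` being realised in `[-2, 2]`. -/

open Module

variable {V : Type*} [NormedAddCommGroup V] [NormedSpace ℝ V]

noncomputable def sine {V : Type*} [NormedAddCommGroup V] [NormedSpace ℝ V] (x y : V) : ℝ :=
  ⨅ t : ℝ, ‖x + t • y‖

def BOrth {V : Type*} [NormedAddCommGroup V] [NormedSpace ℝ V] (x y : V) : Prop :=
  ∀ t : ℝ, ‖x‖ ≤ ‖x + t • y‖

noncomputable def cD (V : Type*) [NormedAddCommGroup V] [NormedSpace ℝ V] : ℝ :=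
  sInf {r : ℝ | ∃ x y : V, ‖x‖ = 1 ∧ ‖y‖ = 1 ∧ BOrth x y ∧ r = sine y x}

noncomputable def cR (V : Type*) [NormedAddCommGroup V] [NormedSpace ℝ V] : ℝ :=
  sSup {r : ℝ | ∃ x y : V, ‖x‖ = 1 ∧ ‖y‖ = 1 ∧ r = |sine x y - sine y x|}

lemma sine_nonneg (x y : V) : 0 ≤ sine x y :=
  le_ciInf fun _ => norm_nonneg _

lemma sine_le_norm_add_smul (x y : V) (t : ℝ) : sine x y ≤ ‖x + t • y‖ :=
  ciInf_le ⟨0, by rintro r ⟨t, rfl⟩; exact norm_nonneg _⟩ t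

lemma sine_le_norm (x y : V) : sine x y ≤ ‖x‖ := by
  simpa using sine_le_norm_add_smul x y 0

lemma BOrth.sine_eq {x y : V} (h : BOrth x y) : sine x y = ‖x‖ :=
  (sine_le_norm x y).antisymm (le_ciInf h)

lemma BOrth.of_dual {x y : V} {g : StrongDual ℝ V} (hg : ‖g‖ ≤ 1) (hgx : g x = ‖x‖)
    (hgy : g y = 0) : BOrth x y := fun t =>
  calc ‖x‖ = g (x + t • y) := by simp [hgx, hgy]
    _ ≤ ‖g‖ * ‖x + t • y‖ := (le_abs_self _).trans (g.le_opNorm _)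
    _ ≤ ‖x + t • y‖ := mul_le_of_le_one_left (norm_nonneg _) hg

lemma exists_unit_borth (hV : 1 < finrank ℝ V) :
    ∃ x y : V, ‖x‖ = 1 ∧ ‖y‖ = 1 ∧ BOrth x y := by
  have : Nontrivial V := Module.nontrivial_of_finrank_pos (zero_lt_one.trans hV)
  obtain ⟨x, hx⟩ := exists_norm_eq V zero_le_one
  obtain ⟨g, hg, hgx⟩ := exists_dual_vector'' ℝ x
  obtain ⟨v, hv⟩ : ∃ v, v ∉ ℝ ∙ x := by
    by_contra! h
    have := finrank_span_le_card (R := ℝ) ({x} : Set V)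
    rw [Submodule.eq_top_iff'.2 h, finrank_top, Set.toFinset_card, Set.card_singleton] at this
    omega
  set w := v - g v • x
  have hw : w ≠ 0 := fun h =>
    hv (sub_eq_zero.1 h ▸ Submodule.smul_mem _ _ (Submodule.mem_span_singleton_self x))
  refine ⟨x, ‖w‖⁻¹ • w, hx, norm_smul_inv_norm hw, BOrth.of_dual hg hgx ?_⟩
  simp [w, hgx, hx]

lemma sine_eq_sInf_image_Icc {x y : V} (hx : ‖x‖ = 1) (hy : ‖y‖ ≤ 1) :
    sine y x = sInf ((fun t : ℝ => ‖y + t • x‖) '' Set.Icc (-2) 2) := by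
  have hbdd : BddBelow ((fun t : ℝ => ‖y + t • x‖) '' Set.Icc (-2) 2) :=
    ⟨0, by rintro r ⟨t, -, rfl⟩; exact norm_nonneg _⟩
  refine le_antisymm (le_csInf ⟨_, Set.mem_image_of_mem _ (Set.left_mem_Icc.2 (by norm_num))⟩
    (by rintro r ⟨t, -, rfl⟩; exact sine_le_norm_add_smul y x t)) (le_ciInf fun t => ?_)
  by_cases ht : t ∈ Set.Icc (-2) 2
  · exact csInf_le hbdd (Set.mem_image_of_mem _ ht)
  · have h2t : 2 < |t| := by
      rw [Set.mem_Icc, not_and_or, not_le, not_le] at ht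
      rw [lt_abs]
      rcases ht with ht | ht <;> [right; left] <;> linarith
    have hlow : |t| - ‖y‖ ≤ ‖y + t • x‖ := by
      simpa [norm_smul, hx, add_comm] using norm_sub_norm_le (t • x) (-y)
    calc sInf _ ≤ ‖y + (0 : ℝ) • x‖ := csInf_le hbdd (Set.mem_image_of_mem _ (by norm_num))
      _ ≤ ‖y + t • x‖ := by rw [zero_smul, add_zero]; linarith

lemma continuousOn_sine :
    ContinuousOn (fun p : V × V => sine p.2 p.1) {p | ‖p.1‖ = 1 ∧ ‖p.2‖ ≤ 1} :=
  (isCompact_Icc.continuous_sInf (f := fun (p : V × V) (t : ℝ) => ‖p.2 + t • p.1‖)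
    (by fun_prop)).continuousOn.congr fun _ hp => sine_eq_sInf_image_Icc hp.1 hp.2

lemma isClosed_setOf_borth : IsClosed {p : V × V | BOrth p.1 p.2} := by
  simp only [BOrth, Set.ofPred_forall]
  exact isClosed_iInter fun t => isClosed_le (by fun_prop) (by fun_prop)

lemma cD_le_sine {x y : V} (hx : ‖x‖ = 1) (hy : ‖y‖ = 1) (hxy : BOrth x y) :
    cD V ≤ sine y x :=
  csInf_le ⟨0, by rintro r ⟨x, y, -, -, -, rfl⟩; exact sine_nonneg y x⟩ ⟨x, y, hx, hy, hxy, rfl⟩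

lemma le_cR {x y : V} (hx : ‖x‖ = 1) (hy : ‖y‖ = 1) : |sine x y - sine y x| ≤ cR V := by
  refine le_csSup ⟨1, ?_⟩ ⟨x, y, hx, hy, rfl⟩
  rintro r ⟨x, y, hx, hy, rfl⟩
  exact abs_sub_le_of_nonneg_of_le (sine_nonneg x y) (hx ▸ sine_le_norm x y)
    (sine_nonneg y x) (hy ▸ sine_le_norm y x)

lemma abs_sine_sub_sine_of_borth {x y : V} (hx : ‖x‖ = 1) (hy : ‖y‖ = 1) (hxy : BOrth x y) :
    |sine x y - sine y x| = 1 - sine y x := by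
  rw [hxy.sine_eq, hx, abs_of_nonneg (sub_nonneg.2 (hy ▸ sine_le_norm y x))]

lemma one_le_cR_add_cD (h : ∃ x y : V, ‖x‖ = 1 ∧ ‖y‖ = 1 ∧ BOrth x y) : 1 ≤ cR V + cD V := by
  obtain ⟨x, y, hx, hy, hxy⟩ := h
  suffices 1 - cR V ≤ cD V by linarith
  refine le_csInf ⟨_, x, y, hx, hy, hxy, rfl⟩ ?_
  rintro r ⟨x, y, hx, hy, hxy, rfl⟩
  have hcR := le_cR (V := V) hx hy
  rw [abs_sine_sub_sine_of_borth hx hy hxy] at hcR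
  linarith

lemma exists_cD_eq_sine [ProperSpace V] (h : ∃ x y : V, ‖x‖ = 1 ∧ ‖y‖ = 1 ∧ BOrth x y) :
    ∃ x y : V, ‖x‖ = 1 ∧ ‖y‖ = 1 ∧ BOrth x y ∧ cD V = sine y x := by
  set O := {p : V × V | ‖p.1‖ = 1 ∧ ‖p.2‖ = 1 ∧ BOrth p.1 p.2}
  have hO : IsCompact O := by
    convert ((isCompact_sphere (0 : V) 1).prod (isCompact_sphere (0 : V) 1)).inter_right
      isClosed_setOf_borth using 1
    ext p
    simp [O, and_assoc]
  obtain ⟨x, y, hx, hy, hxy⟩ := h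
  obtain ⟨⟨a, b⟩, ⟨ha, hb, hab⟩, hmin⟩ := hO.exists_isMinOn ⟨(x, y), hx, hy, hxy⟩
    (continuousOn_sine.mono fun p hp => ⟨hp.1, hp.2.1.le⟩)
  refine ⟨a, b, ha, hb, hab, le_antisymm ?_ ?_⟩
  · exact cD_le_sine ha hb hab
  · refine le_csInf ⟨_, a, b, ha, hb, hab, rfl⟩ ?_
    rintro r ⟨x, y, hx, hy, hxy, rfl⟩
    exact hmin (show (x, y) ∈ O from ⟨hx, hy, hxy⟩)

theorem cR_add_cD_eq_one_iff (hV : finrank ℝ V = 2) :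
    cR V + cD V = 1 ↔
      ∃ x y : V, ‖x‖ = 1 ∧ ‖y‖ = 1 ∧ BOrth x y ∧ cR V = |sine x y - sine y x| := by
  constructor
  · intro h
    have : FiniteDimensional ℝ V := Module.finite_of_finrank_eq_succ hV
    obtain ⟨x, y, hx, hy, hxy, hcD⟩ := exists_cD_eq_sine (exists_unit_borth (V := V) (by omega))
    refine ⟨x, y, hx, hy, hxy, ?_⟩
    rw [abs_sine_sub_sine_of_borth hx hy hxy, ← hcD]
    linarith
  · rintro ⟨x, y, hx, hy, hxy, hcR⟩
    have hlow := one_le_cR_add_cD ⟨x, y, hx, hy, hxy⟩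
    have hcD := cD_le_sine hx hy hxy
    rw [abs_sine_sub_sine_of_borth hx hy hxy] at hcR
    linarith
end

section
/- In a normed plane, the unit circle is an affine regular hexagon if and only if there exist three pairwise non-parallel directions x, y, z with x ⊣_B y, y ⊣_B z, and z ⊣_B x. -/
/-!
If `u`, `v`, `u + v` are unit vectors with `u ⊣ v`, `v ⊣ u + v` and `u + v ⊣ u`, then for
`w = p • u + q • v` the three orthogonalities give `|p|, |q|, |p - q| ≤ ‖w‖`, and the region
`|p|, |q|, |p - q| ≤ 1` is exactly the hexagon with vertices `±u, ±v, ±(u + v)`; so this hexagon is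
the unit ball. A Birkhoff cycle `x ⊣ y ⊣ z ⊣ x` of pairwise independent vectors takes this shape
after writing `z = a • x + b • y` and rescaling, because the cycle forces `‖a • x‖ = ‖b • y‖ = ‖z‖`.
Conversely, when the unit ball is that hexagon, the linear functionals `p`, `q - p` and `q` have
norm one and witness `u ⊣ v`, `v ⊣ u + v` and `u + v ⊣ u`.
-/

open Module

variable {V : Type*} [NormedAddCommGroup V] [NormedSpace ℝ V]

section LinearAlgebra

variable {K M : Type*} [Field K] [AddCommGroup M] [Module K M] {x y : M}

theorem linearIndependent_pair_iff_ne_zero_and_forall_ne_smul :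
    LinearIndependent K ![x, y] ↔ x ≠ 0 ∧ ∀ c : K, y ≠ c • x := by
  refine ⟨fun h => ⟨h.ne_zero 0, fun c hc => ?_⟩, fun ⟨hx, h⟩ => ?_⟩
  · exact (LinearIndependent.pair_iff' (h.ne_zero 0)).1 h c hc.symm
  · exact (LinearIndependent.pair_iff' hx).2 fun c hc => h c hc.symm

theorem exists_linearMap_apply_pair_eq (hM : finrank K M = 2)
    (hli : LinearIndependent K ![x, y]) (a b : K) :
    ∃ f : M →ₗ[K] K, f x = a ∧ f y = b := by
  let B := basisOfLinearIndependentOfCardEqFinrank hli (by simp [hM])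
  refine ⟨B.constr K ![a, b], ?_, ?_⟩
  · simpa [B] using B.constr_basis K ![a, b] 0
  · simpa [B] using B.constr_basis K ![a, b] 1

theorem span_pair_eq_top_of_finrank_eq_two (hM : finrank K M = 2)
    (hli : LinearIndependent K ![x, y]) : Submodule.span K {x, y} = ⊤ := by
  have : FiniteDimensional K M := .of_finrank_pos (by omega)
  have hspan := hli.span_eq_top_of_card_eq_finrank' (by simp [hM])
  rwa [Matrix.range_cons_cons_empty] at hspan

end LinearAlgebra

section Convex

variable {E : Type*} [AddCommGroup E] [Module ℝ E] {s : Set E} {x y : E}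

theorem Convex.smul_add_smul_mem_of_zero_mem (hs : Convex ℝ s) (h0 : (0 : E) ∈ s)
    (hx : x ∈ s) (hy : y ∈ s) {a b : ℝ} (ha : 0 ≤ a) (hb : 0 ≤ b) (hab : a + b ≤ 1) :
    a • x + b • y ∈ s := by
  rcases (add_nonneg ha hb).eq_or_lt with hab0 | hab0
  · obtain ⟨rfl, rfl⟩ : a = 0 ∧ b = 0 := ⟨by linarith, by linarith⟩
    simpa using h0
  have hmem := hs.smul_mem_of_zero_mem h0
    (hs hx hy (div_nonneg ha hab0.le) (div_nonneg hb hab0.le) (by field_simp))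
    ⟨hab0.le, hab⟩
  convert hmem using 1
  rw [smul_add, smul_smul, smul_smul, mul_div_cancel₀ _ hab0.ne', mul_div_cancel₀ _ hab0.ne']

theorem abs_le_one_of_mem_convexHull {T : Set E} (f : E →ₗ[ℝ] ℝ) (hT : ∀ p ∈ T, |f p| ≤ 1)
    {p : E} (hp : p ∈ convexHull ℝ T) : |f p| ≤ 1 := by
  have hconv : Convex ℝ {p : E | f p ≤ 1 ∧ -1 ≤ f p} :=
    (convex_halfSpace_le f.isLinear 1).inter (convex_halfSpace_ge f.isLinear (-1))
  exact abs_le.2 (convexHull_min (fun q hq => (abs_le.1 (hT q hq)).symm) hconv hp).symm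

end Convex

theorem exists_one_lt_smul_mem_of_mem_interior {E : Type*} [TopologicalSpace E] [AddCommGroup E]
    [Module ℝ E] [ContinuousSMul ℝ E] {s : Set E} {x : E} (hx : x ∈ interior s) :
    ∃ t : ℝ, 1 < t ∧ t • x ∈ s := by
  have hcont : Filter.Tendsto (fun t : ℝ => t • x) (nhdsWithin 1 (Set.Ioi 1)) (nhds x) := by
    have : Continuous fun t : ℝ => t • x := continuous_id.smul continuous_const
    simpa using (this.tendsto 1).mono_left nhdsWithin_le_nhds
  obtain ⟨t, ht, hts⟩ :=
    ((hcont.eventually (mem_interior_iff_mem_nhds.1 hx)).and self_mem_nhdsWithin).exists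
  exact ⟨t, hts, ht⟩

namespace BOrth

variable {x y : V}

theorem smul (h : BOrth x y) {a : ℝ} (ha : a ≠ 0) (b : ℝ) : BOrth (a • x) (b • y) := by
  intro t
  have key : a • x + t • b • y = a • (x + (t * b / a) • y) := by
    rw [smul_add, smul_smul, smul_smul, mul_div_cancel₀ _ ha]
  rw [key, norm_smul, norm_smul]
  exact mul_le_mul_of_nonneg_left (h _) (norm_nonneg _)

theorem abs_mul_norm_le (h : BOrth x y) (a b : ℝ) : |a| * ‖x‖ ≤ ‖a • x + b • y‖ := by
  rcases eq_or_ne a 0 with rfl | ha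
  · simp
  · simpa [norm_smul] using h.smul ha b 1

theorem of_norming_functional (f : V →ₗ[ℝ] ℝ) (hf : ∀ w, |f w| ≤ ‖w‖) (hx : f x = ‖x‖)
    (hy : f y = 0) : BOrth x y := fun t =>
  calc ‖x‖ = f (x + t • y) := by simp [hx, hy]
    _ ≤ |f (x + t • y)| := le_abs_self _
    _ ≤ ‖x + t • y‖ := hf _

end BOrth

theorem norm_eq_of_bOrth_cycle {u v : V} (huv : BOrth u v) (hvw : BOrth v (u + v))
    (hwu : BOrth (u + v) u) : ‖u‖ = ‖u + v‖ ∧ ‖v‖ = ‖u + v‖ := by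
  have h₁ : ‖u‖ ≤ ‖u + v‖ := by simpa using huv 1
  have h₂ : ‖u + v‖ ≤ ‖v‖ := by simpa using hwu (-1)
  have h₃ : ‖v‖ ≤ ‖u‖ := by simpa using hvw (-1)
  constructor <;> linarith

section Hexagon

variable {E : Type*} [AddCommGroup E] {u v : E}

def hexagon (u v : E) : Set E := {u, -u, v, -v, u + v, -(u + v)}

theorem hexagon_neg_neg (u v : E) : hexagon (-u) (-v) = hexagon u v := by
  ext w
  simp only [hexagon, Set.mem_insert_iff, Set.mem_singleton_iff, neg_neg, ← neg_add]
  tauto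

theorem finite_hexagon (u v : E) : (hexagon u v).Finite := by
  simp [hexagon]

variable [Module ℝ E]

theorem zero_mem_convexHull_hexagon : (0 : E) ∈ convexHull ℝ (hexagon u v) := by
  have hu : u ∈ hexagon u v := by simp [hexagon]
  have hnu : -u ∈ hexagon u v := by simp [hexagon]
  convert convex_convexHull ℝ _ (subset_convexHull ℝ _ hu) (subset_convexHull ℝ _ hnu)
    (by norm_num : (0 : ℝ) ≤ 1 / 2) (by norm_num : (0 : ℝ) ≤ 1 / 2) (by norm_num) using 1
  module

theorem smul_add_smul_mem_convexHull_hexagon_of_nonneg {p q : ℝ} (hp : 0 ≤ p) (hp₁ : p ≤ 1)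
    (hq : |q| ≤ 1) (hpq : |p - q| ≤ 1) : p • u + q • v ∈ convexHull ℝ (hexagon u v) := by
  have combo : ∀ x ∈ hexagon u v, ∀ y ∈ hexagon u v, ∀ a b : ℝ, 0 ≤ a → 0 ≤ b → a + b ≤ 1 →
      a • x + b • y ∈ convexHull ℝ (hexagon u v) := fun x hx y hy a b ha hb hab =>
    (convex_convexHull ℝ _).smul_add_smul_mem_of_zero_mem zero_mem_convexHull_hexagon
      (subset_convexHull ℝ _ hx) (subset_convexHull ℝ _ hy) ha hb hab
  rw [abs_le] at hq hpq
  rcases le_total 0 q with hq0 | hq0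
  · rcases le_total q p with hqp | hpq'
    · convert combo u (by simp [hexagon]) (u + v) (by simp [hexagon]) (p - q) q
        (by linarith) hq0 (by linarith) using 1
      module
    · convert combo (u + v) (by simp [hexagon]) v (by simp [hexagon]) p (q - p)
        hp (by linarith) (by linarith) using 1
      module
  · convert combo u (by simp [hexagon]) (-v) (by simp [hexagon]) p (-q)
      hp (by linarith) (by linarith) using 1
    module

theorem smul_add_smul_mem_convexHull_hexagon {p q : ℝ} (hp : |p| ≤ 1) (hq : |q| ≤ 1)
    (hpq : |p - q| ≤ 1) : p • u + q • v ∈ convexHull ℝ (hexagon u v) := by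
  rcases le_total 0 p with hp0 | hp0
  · exact smul_add_smul_mem_convexHull_hexagon_of_nonneg hp0 (abs_le.1 hp).2 hq hpq
  · rw [← hexagon_neg_neg]
    convert smul_add_smul_mem_convexHull_hexagon_of_nonneg (u := -u) (v := -v) (p := -p) (q := -q)
      (by linarith) (by linarith [(abs_le.1 hp).1]) (by rwa [abs_neg])
      (by rwa [← abs_neg, neg_sub_neg, neg_sub]) using 1
    module

theorem abs_le_one_of_mem_hexagon (f : E →ₗ[ℝ] ℝ) (hu : |f u| ≤ 1) (hv : |f v| ≤ 1)
    (huv : |f u + f v| ≤ 1) : ∀ p ∈ hexagon u v, |f p| ≤ 1 := by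
  rintro p (rfl | rfl | rfl | rfl | rfl | rfl) <;> simpa only [map_neg, map_add, abs_neg]

end Hexagon

theorem abs_le_norm_of_sphere_subset_convexHull {T : Set V}
    (hS : {w : V | ‖w‖ = 1} ⊆ convexHull ℝ T) (f : V →ₗ[ℝ] ℝ) (hT : ∀ p ∈ T, |f p| ≤ 1)
    (w : V) : |f w| ≤ ‖w‖ := by
  rcases eq_or_ne w 0 with rfl | hw
  · simp
  have hunit : ‖‖w‖⁻¹ • w‖ = 1 := by
    rw [norm_smul, norm_inv, norm_norm, inv_mul_cancel₀ (norm_ne_zero_iff.2 hw)]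
  have h := abs_le_one_of_mem_convexHull f hT (hS hunit)
  rwa [map_smul, smul_eq_mul, abs_mul, abs_inv, abs_norm, inv_mul_le_iff₀ (norm_pos_iff.2 hw),
    mul_one] at h

theorem isClosed_convexHull_hexagon (u v : V) : IsClosed (convexHull ℝ (hexagon u v)) :=
  ((finite_hexagon u v).isCompact_convexHull (𝕜 := ℝ)).isClosed

theorem convexHull_hexagon_eq_closedBall {u v : V} (hspan : Submodule.span ℝ {u, v} = ⊤)
    (hu : ‖u‖ = 1) (hv : ‖v‖ = 1) (huv : ‖u + v‖ = 1)
    (h₁ : BOrth u v) (h₂ : BOrth v (u + v)) (h₃ : BOrth (u + v) u) :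
    convexHull ℝ (hexagon u v) = Metric.closedBall 0 1 := by
  refine (convexHull_min ?_ (convex_closedBall 0 1)).antisymm fun w hw => ?_
  · rintro p (rfl | rfl | rfl | rfl | rfl | rfl) <;>
    simp only [mem_closedBall_zero_iff, norm_neg, hu, hv, huv, le_refl]
  obtain ⟨p, q, rfl⟩ := Submodule.mem_span_pair.1 (hspan ▸ Submodule.mem_top : w ∈ _)
  rw [mem_closedBall_zero_iff] at hw
  have hp : |p| ≤ ‖p • u + q • v‖ := by simpa [hu] using h₁.abs_mul_norm_le p q
  have hq : |q| ≤ ‖p • u + q • v‖ := by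
    convert h₃.abs_mul_norm_le q (p - q) using 1
    · rw [huv, mul_one]
    · congr 1; module
  have hpq : |p - q| ≤ ‖p • u + q • v‖ := by
    convert h₂.abs_mul_norm_le (q - p) p using 1
    · rw [hv, mul_one, abs_sub_comm]
    · congr 1; module
  exact smul_add_smul_mem_convexHull_hexagon (hp.trans hw) (hq.trans hw) (hpq.trans hw)

section FiniteDimensional

variable {u v : V}

theorem norm_add_eq_one_of_sphere_eq_frontier (hV : finrank ℝ V = 2)
    (hli : LinearIndependent ℝ ![u, v])
    (hS : {w : V | ‖w‖ = 1} = frontier (convexHull ℝ (hexagon u v))) : ‖u + v‖ = 1 := by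
  have hclosed := isClosed_convexHull_hexagon u v
  suffices u + v ∉ interior (convexHull ℝ (hexagon u v)) by
    have hfr : u + v ∈ frontier (convexHull ℝ (hexagon u v)) := by
      rw [hclosed.frontier_eq]
      exact ⟨subset_convexHull ℝ _ (by simp [hexagon]), this⟩
    rwa [← hS] at hfr
  intro hint
  obtain ⟨t, ht, hmem⟩ := exists_one_lt_smul_mem_of_mem_interior hint
  obtain ⟨f, hfu, hfv⟩ := exists_linearMap_apply_pair_eq hV hli (1 / 2) (1 / 2)
  have hf := abs_le_one_of_mem_convexHull f
    (abs_le_one_of_mem_hexagon f (by norm_num [hfu]) (by norm_num [hfv]) (by norm_num [hfu, hfv]))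
    hmem
  simp only [map_smul, map_add, hfu, hfv, add_halves, smul_eq_mul, mul_one] at hf
  linarith [le_abs_self t]

theorem bOrth_cycle_of_sphere_eq_frontier (hV : finrank ℝ V = 2)
    (hli : LinearIndependent ℝ ![u, v]) (hu : ‖u‖ = 1) (hv : ‖v‖ = 1)
    (hS : {w : V | ‖w‖ = 1} = frontier (convexHull ℝ (hexagon u v))) :
    BOrth u v ∧ BOrth v (u + v) ∧ BOrth (u + v) u := by
  have huv := norm_add_eq_one_of_sphere_eq_frontier hV hli hS
  have hsub : {w : V | ‖w‖ = 1} ⊆ convexHull ℝ (hexagon u v) :=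
    hS ▸ (isClosed_convexHull_hexagon u v).frontier_subset
  have norming (a b : ℝ) (ha : |a| ≤ 1) (hb : |b| ≤ 1) (hab : |a + b| ≤ 1) :
      ∃ f : V →ₗ[ℝ] ℝ, f u = a ∧ f v = b ∧ ∀ w, |f w| ≤ ‖w‖ := by
    obtain ⟨f, hfu, hfv⟩ := exists_linearMap_apply_pair_eq hV hli a b
    subst hfu hfv
    exact ⟨f, rfl, rfl, abs_le_norm_of_sphere_subset_convexHull hsub f
      (abs_le_one_of_mem_hexagon f ha hb hab)⟩
  obtain ⟨f₁, hu₁, hv₁, hf₁⟩ := norming 1 0 (by norm_num) (by norm_num) (by norm_num)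
  obtain ⟨f₂, hu₂, hv₂, hf₂⟩ := norming (-1) 1 (by norm_num) (by norm_num) (by norm_num)
  obtain ⟨f₃, hu₃, hv₃, hf₃⟩ := norming 0 1 (by norm_num) (by norm_num) (by norm_num)
  exact ⟨BOrth.of_norming_functional f₁ hf₁ (by rw [hu₁, hu]) hv₁,
    BOrth.of_norming_functional f₂ hf₂ (by rw [hv₂, hv]) (by simp [hu₂, hv₂]),
    BOrth.of_norming_functional f₃ hf₃ (by simp [hu₃, hv₃, huv]) hu₃⟩

theorem exists_unit_bOrth_cycle (hV : finrank ℝ V = 2) {x y z : V}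
    (hxy : LinearIndependent ℝ ![x, y]) (hzy : ∀ c : ℝ, z ≠ c • y) (hzx : ∀ c : ℝ, z ≠ c • x)
    (h₁ : BOrth x y) (h₂ : BOrth y z) (h₃ : BOrth z x) :
    ∃ u v : V, LinearIndependent ℝ ![u, v] ∧ ‖u‖ = 1 ∧ ‖v‖ = 1 ∧ ‖u + v‖ = 1 ∧
      BOrth u v ∧ BOrth v (u + v) ∧ BOrth (u + v) u := by
  have hz : z ∈ Submodule.span ℝ {x, y} := span_pair_eq_top_of_finrank_eq_two hV hxy ▸ trivial
  obtain ⟨a, b, rfl⟩ := Submodule.mem_span_pair.1 hz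
  have ha : a ≠ 0 := by rintro rfl; exact hzy b (by simp)
  have hb : b ≠ 0 := by rintro rfl; exact hzx a (by simp)
  set r := ‖a • x + b • y‖
  have hr : r ≠ 0 := norm_ne_zero_iff.2 fun h => hzx 0 (by simp [h])
  have hsum : (a / r) • x + (b / r) • y = r⁻¹ • (a • x + b • y) := by module
  have huv : BOrth ((a / r) • x) ((b / r) • y) := h₁.smul (div_ne_zero ha hr) _
  have hvw : BOrth ((b / r) • y) ((a / r) • x + (b / r) • y) :=
    hsum ▸ h₂.smul (div_ne_zero hb hr) r⁻¹
  have hwu : BOrth ((a / r) • x + (b / r) • y) ((a / r) • x) :=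
    hsum ▸ h₃.smul (inv_ne_zero hr) (a / r)
  have hw : ‖(a / r) • x + (b / r) • y‖ = 1 := by
    rw [hsum, norm_smul, norm_inv, norm_norm, inv_mul_cancel₀ hr]
  obtain ⟨hu, hv⟩ := norm_eq_of_bOrth_cycle huv hvw hwu
  refine ⟨_, _, ?_, hu.trans hw, hv.trans hw, hw, huv, hvw, hwu⟩
  exact (LinearIndependent.pair_smul_smul_iff (div_ne_zero ha hr).isUnit
    (div_ne_zero hb hr).isUnit).2 hxy

end FiniteDimensional

theorem hexagon_iff_birkhoff_cycle (hV : finrank ℝ V = 2) :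
    (∃ u v : V, LinearIndependent ℝ ![u, v] ∧ ‖u‖ = 1 ∧ ‖v‖ = 1 ∧
      {w : V | ‖w‖ = 1} =
        frontier (convexHull ℝ ({u, -u, v, -v, u + v, -(u + v)} : Set V))) ↔
    (∃ x y z : V, x ≠ 0 ∧ y ≠ 0 ∧ z ≠ 0 ∧
      (∀ c : ℝ, y ≠ c • x) ∧ (∀ c : ℝ, z ≠ c • y) ∧ (∀ c : ℝ, z ≠ c • x) ∧
      BOrth x y ∧ BOrth y z ∧ BOrth z x) := by
  constructor
  · rintro ⟨u, v, hli, hu, hv, hS⟩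
    obtain ⟨h₁, h₂, h₃⟩ := bOrth_cycle_of_sphere_eq_frontier hV hli hu hv hS
    obtain ⟨hu₀, hvu⟩ := linearIndependent_pair_iff_ne_zero_and_forall_ne_smul.1 hli
    have hli' : LinearIndependent ℝ ![v, u + v] := by
      rwa [add_comm, LinearIndependent.pair_add_right_iff, LinearIndependent.pair_symm_iff]
    obtain ⟨hv₀, hwv⟩ := linearIndependent_pair_iff_ne_zero_and_forall_ne_smul.1 hli'
    obtain ⟨-, hwu⟩ := linearIndependent_pair_iff_ne_zero_and_forall_ne_smul.1
      (LinearIndependent.pair_add_right_iff.2 hli)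
    exact ⟨u, v, u + v, hu₀, hv₀, by simpa using hwv 0, hvu, hwv, hwu, h₁, h₂, h₃⟩
  · rintro ⟨x, y, z, hx, -, -, hyx, hzy, hzx, h₁, h₂, h₃⟩
    obtain ⟨u, v, hli, hu, hv, huv, c₁, c₂, c₃⟩ := exists_unit_bOrth_cycle hV
      (linearIndependent_pair_iff_ne_zero_and_forall_ne_smul.2 ⟨hx, hyx⟩) hzy hzx h₁ h₂ h₃
    refine ⟨u, v, hli, hu, hv, ?_⟩
    rw [← hexagon, convexHull_hexagon_eq_closedBall (span_pair_eq_top_of_finrank_eq_two hV hli)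
      hu hv huv c₁ c₂ c₃, frontier_closedBall _ one_ne_zero]
    ext w
    simp
end
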